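/- Let 0 < α < 1, γ > 0, q > 0, m > 0, K > 0, and set Θ = (1 − e^{−γm/(1−α)})^{1−α} / (γ/(1−α))^{1−α}. For every measurable k : [0, m] → [0, ∞) with ∫_0^m k(x) dx = K, the aggregate gross production profit satisfies q^α·∫_0^m e^{−γx}·k(x)^α dx ≤ Θ·(q·K)^α, with equality for the allocation k(x) = (γ·K / ((1−α)·(1 − e^{−γm/(1−α)})))·e^{−γx/(1−α)}. Hence the firm's maximized aggregate profit given aggregate compute K equals Π^F(q, K) = Θ·(q·K)^α − K. -/

import Mathlib

open MeasureTheory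

/-!
Hölder's inequality with exponents `1/(1-α)` and `1/α` gives
`∫₀ᵐ e^{-γx} k^α ≤ (∫₀ᵐ e^{-γx/(1-α)})^{1-α} (∫₀ᵐ k)^α`, and the first factor is the
elementary integral `(1 - e^{-γm/(1-α)}) / (γ/(1-α))`. Equality in Hölder holds when `k` is
proportional to `(e^{-γx})^{1/(1-α)}`, which is the stated allocation, normalised so that it
spends exactly `K`.
-/

theorem integral_exp_neg_mul_div (γ β m : ℝ) (hγ : γ ≠ 0) (hβ : β ≠ 0) :
    ∫ x in (0:ℝ)..m, Real.exp (-γ * x / β) = (1 - Real.exp (-γ * m / β)) / (γ / β) := by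
  have hc : -(γ / β) ≠ 0 := neg_ne_zero.2 (div_ne_zero hγ hβ)
  have h := intervalIntegral.integral_comp_mul_left (a := 0) (b := m) Real.exp hc
  simp only [integral_exp, mul_zero, Real.exp_zero, smul_eq_mul] at h
  simp only [show ∀ x, -γ * x / β = -(γ / β) * x by intro x; ring]
  rw [h]
  field_simp
  ring

theorem integral_mul_rpow_le {X : Type*} [MeasurableSpace X] {μ : Measure X} {α : ℝ}
    (hα0 : 0 < α) (hα1 : α < 1) {w k : X → ℝ} (hw0 : 0 ≤ᵐ[μ] w) (hk0 : 0 ≤ᵐ[μ] k)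
    (hw : MemLp w (ENNReal.ofReal (1 - α)⁻¹) μ) (hk : Integrable k μ) :
    ∫ x, w x * k x ^ α ∂μ ≤ (∫ x, w x ^ (1 - α)⁻¹ ∂μ) ^ (1 - α) * (∫ x, k x ∂μ) ^ α := by
  have hpq : Real.HolderConjugate (1 - α)⁻¹ α⁻¹ :=
    ⟨by rw [inv_inv, inv_inv]; ring, by simpa using hα1, by positivity⟩
  have hkα : MemLp (fun x => k x ^ α) (ENNReal.ofReal α⁻¹) μ := by
    have h := (memLp_norm_rpow_iff (p := 1) hk.aestronglyMeasurable
      (by simpa using hα0) ENNReal.ofReal_ne_top).mpr (memLp_one_iff_integrable.mpr hk)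
    rw [ENNReal.toReal_ofReal hα0.le, one_div, ← ENNReal.ofReal_inv_of_pos hα0] at h
    refine h.ae_eq ?_
    filter_upwards [hk0] with x hx
    rw [Real.norm_of_nonneg hx]
  have hkα0 : 0 ≤ᵐ[μ] fun x => k x ^ α := by
    filter_upwards [hk0] with x hx
    exact Real.rpow_nonneg hx α
  have hkαk : ∫ x, (k x ^ α) ^ α⁻¹ ∂μ = ∫ x, k x ∂μ := by
    refine integral_congr_ae ?_
    filter_upwards [hk0] with x hx
    rw [← Real.rpow_mul hx, mul_inv_cancel₀ hα0.ne', Real.rpow_one]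
  simpa only [one_div, inv_inv, hkαk] using integral_mul_le_Lp_mul_Lq_of_nonneg hpq hw0 hkα0 hw hkα

theorem intervalIntegral_exp_mul_rpow_le {α γ m : ℝ} (hα0 : 0 < α) (hα1 : α < 1) (hγ : 0 < γ)
    (hm : 0 ≤ m) {k : ℝ → ℝ} (hk0 : ∀ x ∈ Set.Icc 0 m, 0 ≤ k x)
    (hk : IntervalIntegrable k volume 0 m) :
    ∫ x in (0:ℝ)..m, Real.exp (-γ * x) * k x ^ α ≤
      ((1 - Real.exp (-γ * m / (1 - α))) / (γ / (1 - α))) ^ (1 - α) *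
        (∫ x in (0:ℝ)..m, k x) ^ α := by
  have hα : 1 - α ≠ 0 := by linarith
  have hk0' : 0 ≤ᵐ[volume.restrict (Set.Ioc 0 m)] k := by
    filter_upwards [ae_restrict_mem measurableSet_Ioc] with x hx
    exact hk0 x (Set.Ioc_subset_Icc_self hx)
  have hw : MemLp (fun x => Real.exp (-γ * x)) (ENNReal.ofReal (1 - α)⁻¹)
      (volume.restrict (Set.Ioc 0 m)) :=
    have hanti : Antitone fun x => Real.exp (-γ * x) := fun x y hxy =>
      Real.exp_le_exp.2 (by nlinarith)
    (hanti.antitoneOn _).memLp_isCompact isCompact_Icc |>.mono_measure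
      (Measure.restrict_mono Set.Ioc_subset_Icc_self le_rfl)
  have hw_pow : ∀ x, Real.exp (-γ * x) ^ (1 - α)⁻¹ = Real.exp (-γ * x / (1 - α)) := by
    intro x
    rw [← Real.exp_mul, div_eq_mul_inv]
  have h := integral_mul_rpow_le hα0 hα1 (Filter.Eventually.of_forall fun x => (Real.exp_pos _).le)
    hk0' hw ((intervalIntegrable_iff_integrableOn_Ioc_of_le hm).mp hk)
  simp only [hw_pow, ← intervalIntegral.integral_of_le hm] at h
  rwa [integral_exp_neg_mul_div γ (1 - α) m hγ.ne' hα] at h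

theorem intervalIntegral_exp_mul_rpow_optimal {α γ m c : ℝ} (hα1 : α < 1) (hγ : γ ≠ 0)
    (hc : 0 ≤ c) :
    ∫ x in (0:ℝ)..m, Real.exp (-γ * x) * (c * Real.exp (-γ * x / (1 - α))) ^ α =
      c ^ α * ((1 - Real.exp (-γ * m / (1 - α))) / (γ / (1 - α))) := by
  have hα : 1 - α ≠ 0 := by linarith
  have h : ∀ x, Real.exp (-γ * x) * (c * Real.exp (-γ * x / (1 - α))) ^ α =
      c ^ α * Real.exp (-γ * x / (1 - α)) := by
    intro x
    rw [Real.mul_rpow hc (Real.exp_pos _).le, ← Real.exp_mul, mul_left_comm, ← Real.exp_add]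
    congr 2
    field_simp
    ring
  simp only [h, intervalIntegral.integral_const_mul, integral_exp_neg_mul_div γ (1 - α) m hγ hα]

theorem div_rpow_mul_self {s K α : ℝ} (hs : 0 < s) (hK : 0 ≤ K) :
    (K / s) ^ α * s = s ^ (1 - α) * K ^ α := by
  rw [Real.div_rpow hK hs.le, Real.rpow_sub hs, Real.rpow_one]
  have : s ^ α ≠ 0 := (Real.rpow_pos_of_pos hs α).ne'
  field_simp

/-- Let 0 < α < 1, γ > 0, q > 0, m > 0, K > 0 and set
Θ = (1 − e^(−γm/(1−α)))^(1−α) / (γ/(1−α))^(1−α). For every measurable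
k : [0,m] → [0,∞) with ∫_0^m k = K, the aggregate gross production profit
satisfies q^α·∫_0^m e^(−γx)·k(x)^α dx ≤ Θ·(q·K)^α, with equality for
k(x) = (γ·K/((1−α)·(1 − e^(−γm/(1−α)))))·e^(−γx/(1−α)); hence the firm's
maximized aggregate profit given aggregate compute K equals Θ·(q·K)^α − K. -/
theorem aggregate_profit_max (α γ q m K : ℝ)
    (hα0 : 0 < α) (hα1 : α < 1) (hγ : 0 < γ) (hq : 0 < q)
    (hm : 0 < m) (hK : 0 < K) :
    (∀ k : ℝ → ℝ, Measurable k → (∀ x ∈ Set.Icc (0:ℝ) m, 0 ≤ k x) →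
        (∫ x in (0:ℝ)..m, k x) = K →
        q ^ α * ∫ x in (0:ℝ)..m, Real.exp (-γ * x) * (k x) ^ α ≤
          ((1 - Real.exp (-γ * m / (1 - α))) ^ (1 - α) /
              (γ / (1 - α)) ^ (1 - α)) * (q * K) ^ α) ∧
      (q ^ α * ∫ x in (0:ℝ)..m, Real.exp (-γ * x) *
            ((γ * K / ((1 - α) * (1 - Real.exp (-γ * m / (1 - α))))) *
              Real.exp (-γ * x / (1 - α))) ^ α =
          ((1 - Real.exp (-γ * m / (1 - α))) ^ (1 - α) /
              (γ / (1 - α)) ^ (1 - α)) * (q * K) ^ α) ∧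
      IsGreatest
        {p : ℝ | ∃ k : ℝ → ℝ, Measurable k ∧
            (∀ x ∈ Set.Icc (0:ℝ) m, 0 ≤ k x) ∧
            (∫ x in (0:ℝ)..m, k x) = K ∧
            p = q ^ α * (∫ x in (0:ℝ)..m, Real.exp (-γ * x) * (k x) ^ α) - K}
        (((1 - Real.exp (-γ * m / (1 - α))) ^ (1 - α) /
            (γ / (1 - α)) ^ (1 - α)) * (q * K) ^ α - K) := by
  have h1α : 0 < 1 - α := by linarith
  set A := 1 - Real.exp (-γ * m / (1 - α))
  have hA : 0 < A := sub_pos.2 (Real.exp_lt_one_iff.2 (by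
    have := div_pos (mul_pos hγ hm) h1α
    rw [neg_mul, neg_div]; linarith))
  have hs : 0 < A / (γ / (1 - α)) := by positivity
  have hΘ : A ^ (1 - α) / (γ / (1 - α)) ^ (1 - α) * (q * K) ^ α =
      q ^ α * ((A / (γ / (1 - α))) ^ (1 - α) * K ^ α) := by
    rw [Real.div_rpow hA.le (by positivity), Real.mul_rpow hq.le hK.le]; ring
  have hbound : ∀ k : ℝ → ℝ, (∀ x ∈ Set.Icc (0:ℝ) m, 0 ≤ k x) → (∫ x in (0:ℝ)..m, k x) = K →
      q ^ α * ∫ x in (0:ℝ)..m, Real.exp (-γ * x) * (k x) ^ α ≤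
        A ^ (1 - α) / (γ / (1 - α)) ^ (1 - α) * (q * K) ^ α := by
    intro k hk0 hkK
    have hk : IntervalIntegrable k volume 0 m := by
      by_contra h
      exact hK.ne' (hkK ▸ intervalIntegral.integral_undef h)
    rw [hΘ, ← hkK]
    exact mul_le_mul_of_nonneg_left (intervalIntegral_exp_mul_rpow_le hα0 hα1 hγ hm.le hk0 hk)
      (by positivity)
  have hc : γ * K / ((1 - α) * A) = K / (A / (γ / (1 - α))) := by field_simp
  have hopt : q ^ α * ∫ x in (0:ℝ)..m, Real.exp (-γ * x) *
      ((γ * K / ((1 - α) * A)) * Real.exp (-γ * x / (1 - α))) ^ α =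
        A ^ (1 - α) / (γ / (1 - α)) ^ (1 - α) * (q * K) ^ α := by
    rw [hc, intervalIntegral_exp_mul_rpow_optimal hα1 hγ.ne' (by positivity),
      div_rpow_mul_self hs hK.le, hΘ]
  refine ⟨fun k _ => hbound k, hopt,
    ⟨fun x => γ * K / ((1 - α) * A) * Real.exp (-γ * x / (1 - α)), by fun_prop,
      fun x _ => by positivity, ?_, by rw [hopt]⟩, ?_⟩
  · rw [intervalIntegral.integral_const_mul, integral_exp_neg_mul_div γ (1 - α) m hγ.ne' h1α.ne', hc,
      div_mul_cancel₀ K hs.ne']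
  · rintro p ⟨k, -, hk0, hkK, rfl⟩
    exact sub_le_sub_right (hbound k hk0 hkK) K
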